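/- Generalized Hardy-Littlewood inequality: Let σ be a measurable function on a domain Ω ⊂ ℝ^d (d ≥ 1) satisfying the admissibility assumptions for σ-rearrangements, with B_σ(μ) finite for all μ ∈ [0, meas(Ω)). Then for every nonnegative f ∈ L¹(Ω): ∫_Ω σ(x)(f(x) − f^{*σ}(x)) dx ≥ 0. -/

import Mathlib

open MeasureTheory Set Filter Metric
open scoped ENNReal NNReal

noncomputable section

/-- The distribution function `μ_q(t) = meas {x ∈ Ω : q x > t}` of a function `q` on `Ω`. -/
def distFun {d : ℕ} (Ω : Set (EuclideanSpace ℝ (Fin d))) (q : EuclideanSpace ℝ (Fin d) → ℝ)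
    (t : ℝ) : ℝ≥0∞ :=
  volume {x | x ∈ Ω ∧ t < q x}

/-- The pseudo-inverse `q♯(s) = inf {t ≥ 0 : μ_q(t) ≤ s}` of the distribution function. -/
def pseudoInv {d : ℕ} (Ω : Set (EuclideanSpace ℝ (Fin d))) (q : EuclideanSpace ℝ (Fin d) → ℝ)
    (s : ℝ≥0∞) : ℝ :=
  sInf {t : ℝ | 0 ≤ t ∧ distFun Ω q t ≤ s}

/-- The Schwarz rearrangement of `q` on `Ω`: `q*(x) = q♯(meas (B(0,|x|) ∩ Ω))`. -/
def schwarzRearr {d : ℕ} (Ω : Set (EuclideanSpace ℝ (Fin d))) (q : EuclideanSpace ℝ (Fin d) → ℝ)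
    (x : EuclideanSpace ℝ (Fin d)) : ℝ :=
  pseudoInv Ω q (volume (Metric.ball (0 : EuclideanSpace ℝ (Fin d)) ‖x‖ ∩ Ω))

/-- The Jacobian `a_σ(e) = meas {x ∈ Ω : σ x < e}`, with extended-real argument. -/
def aSig {d : ℕ} (Ω : Set (EuclideanSpace ℝ (Fin d))) (σ : EuclideanSpace ℝ (Fin d) → ℝ)
    (e : EReal) : ℝ≥0∞ :=
  volume {x | x ∈ Ω ∧ (σ x : EReal) < e}

/-- `e_max = sup {e : a_σ(e) < meas Ω}`. -/
def eMax {d : ℕ} (Ω : Set (EuclideanSpace ℝ (Fin d))) (σ : EuclideanSpace ℝ (Fin d) → ℝ) :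
    EReal :=
  sSup {e : EReal | aSig Ω σ e < volume Ω}

/-- `e_min = ess inf σ` on `Ω`. -/
def eMin {d : ℕ} (Ω : Set (EuclideanSpace ℝ (Fin d))) (σ : EuclideanSpace ℝ (Fin d) → ℝ) :
    EReal :=
  essInf (fun x => (σ x : EReal)) (volume.restrict Ω)

/-- The admissibility assumptions on `σ` from Definition 1. -/
structure SigAdmissible {d : ℕ} (Ω : Set (EuclideanSpace ℝ (Fin d)))
    (σ : EuclideanSpace ℝ (Fin d) → ℝ) : Prop where
  dim_pos : 1 ≤ d
  measurableSet_Ω : MeasurableSet Ω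
  measurable_σ : Measurable σ
  exists_lt : ∃ e : ℝ, aSig Ω σ (e : EReal) < volume Ω
  eMin_lt_eMax : eMin Ω σ < eMax Ω σ
  levelSets : ∀ e : ℝ, (e : EReal) < eMax Ω σ → volume {x | x ∈ Ω ∧ σ x = e} = 0
  tendsto_eMax :
    Tendsto (fun e : ℝ => aSig Ω σ (e : EReal))
      (comap (fun e : ℝ => (e : EReal)) (nhdsWithin (eMax Ω σ) (Iio (eMax Ω σ))))
      (nhds (volume Ω))

/-- The σ-rearrangement `q^{*σ}(x) = q♯(a_σ(σ x)) · 1_{σ x < e_max}`. -/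
def sigRearr {d : ℕ} (Ω : Set (EuclideanSpace ℝ (Fin d))) (σ q : EuclideanSpace ℝ (Fin d) → ℝ)
    (x : EuclideanSpace ℝ (Fin d)) : ℝ :=
  if (σ x : EReal) < eMax Ω σ then pseudoInv Ω q (aSig Ω σ (σ x : EReal)) else 0

end

noncomputable section

/-- The pseudo-inverse `b_σ(μ) = sup {t < e_max : a_σ(t) ≤ μ}` of `a_σ`
(equal to `⊥ = -∞` if the set is empty). -/
def bSig {d : ℕ} (Ω : Set (EuclideanSpace ℝ (Fin d))) (σ : EuclideanSpace ℝ (Fin d) → ℝ)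
    (μ : ℝ≥0∞) : EReal :=
  sSup {t : EReal | t < eMax Ω σ ∧ aSig Ω σ t ≤ μ}

/-- `B_σ(μ) = ∫_{a_σ(σ(x)) < μ} σ(x) dx`, for a real argument `μ`. -/
def BSig {d : ℕ} (Ω : Set (EuclideanSpace ℝ (Fin d))) (σ : EuclideanSpace ℝ (Fin d) → ℝ)
    (μ : ℝ) : ℝ :=
  ∫ x in {x | x ∈ Ω ∧ aSig Ω σ (σ x : EReal) < ENNReal.ofReal μ}, σ x

/-- Finiteness of `B_σ(μ)` for all `μ ∈ [0, meas Ω)`, expressed as integrability of `σ`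
on the corresponding sublevel sets. -/
def BSigFinite {d : ℕ} (Ω : Set (EuclideanSpace ℝ (Fin d)))
    (σ : EuclideanSpace ℝ (Fin d) → ℝ) : Prop :=
  ∀ μ : ℝ, 0 ≤ μ → ENNReal.ofReal μ < volume Ω →
    MeasureTheory.IntegrableOn σ {x | x ∈ Ω ∧ aSig Ω σ (σ x : EReal) < ENNReal.ofReal μ}

/-- `H_σ(μ) = inf_{0 < s ≤ μ} (B_σ(μ+s) + B_σ(μ-s) - 2B_σ(μ))/s²`. -/
def HSig {d : ℕ} (Ω : Set (EuclideanSpace ℝ (Fin d))) (σ : EuclideanSpace ℝ (Fin d) → ℝ)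
    (μ : ℝ) : ℝ :=
  sInf ((fun s => (BSig Ω σ (μ + s) + BSig Ω σ (μ - s) - 2 * BSig Ω σ μ) / s ^ 2) '' Ioc 0 μ)

/-- `K(q*, σ) = 4 ∫₀^{‖q‖_∞} dt / H_σ(μ_q(t))` (the integrand vanishes for `t ≥ ‖q‖_∞`). -/
def Kconst {d : ℕ} (Ω : Set (EuclideanSpace ℝ (Fin d))) (σ q : EuclideanSpace ℝ (Fin d) → ℝ) :
    ℝ≥0∞ :=
  4 * ∫⁻ t in Ioi (0 : ℝ), ENNReal.ofReal ((HSig Ω σ ((distFun Ω q t).toReal))⁻¹)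

/-- `β_{f,g}(s) = meas {x ∈ Ω : f x ≤ s < g x}`. -/
def betaFun {d : ℕ} (Ω : Set (EuclideanSpace ℝ (Fin d))) (f g : EuclideanSpace ℝ (Fin d) → ℝ)
    (s : ℝ) : ℝ≥0∞ :=
  volume {x | x ∈ Ω ∧ f x ≤ s ∧ s < g x}

end

/-! Since `∫ e, (𝟙_(0,s] - 𝟙_(s,0]) e = s`, Fubini gives `∫ σ h = -∫ e, ∫_{σ < e} h` whenever
`∫ h = 0`; for `h = f - f^{*σ}` it therefore suffices that `f^{*σ}` carries at least as much mass
as `f` on every sublevel set `{σ < e}`. The map `x ↦ a_σ(σ x)` is uniformly distributed on `Ω`,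
`meas {a_σ(σ) < μ} = μ`, and `{f^{*σ} > t}` agrees with `{a_σ(σ) < μ_f(t)}` up to the null set
`{a_σ(σ) = 0}`. Hence `meas ({σ < e} ∩ {f^{*σ} > t}) = min (a_σ(e)) (μ_f(t))`, which bounds
`meas ({σ < e} ∩ {f > t})`, with equality of the two distribution functions on all of `Ω`; the
layer-cake formula in `t` turns this into the comparison of integrals. -/

open Topology

noncomputable def signedIocIndicator (s : ℝ) : ℝ → ℝ :=
  (Ioc 0 s).indicator 1 - (Ioc s 0).indicator 1

lemma signedIocIndicator_apply (s e : ℝ) :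
    signedIocIndicator s e = (if 0 < e then 1 else 0) - (if s < e then 1 else 0) := by
  simp only [signedIocIndicator, Pi.sub_apply, indicator_apply, mem_Ioc, Pi.one_apply]
  split_ifs <;> grind

lemma integral_signedIocIndicator (s : ℝ) : ∫ e, signedIocIndicator s e = s := by
  rcases le_total 0 s with hs | hs <;>
    simp [signedIocIndicator, integral_neg, integral_indicator_one measurableSet_Ioc, hs]

lemma integral_abs_signedIocIndicator (s : ℝ) : ∫ e, |signedIocIndicator s e| = |s| := by
  rcases le_total 0 s with hs | hs <;>
    simp [signedIocIndicator, ← Real.norm_eq_abs, norm_indicator_eq_indicator_norm,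
      hs, abs_of_nonneg, abs_of_nonpos]

lemma integrable_signedIocIndicator (s : ℝ) : Integrable (signedIocIndicator s) :=
  ((integrable_indicator_iff measurableSet_Ioc).2 (integrableOn_const measure_Ioc_lt_top.ne)).sub
    ((integrable_indicator_iff measurableSet_Ioc).2 (integrableOn_const measure_Ioc_lt_top.ne))

lemma measurable_signedIocIndicator : Measurable (Function.uncurry signedIocIndicator) := by
  have : Function.uncurry signedIocIndicator = fun p : ℝ × ℝ =>
      (if 0 < p.2 then 1 else 0) - (if p.1 < p.2 then 1 else 0) := by
    ext ⟨s, e⟩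
    exact signedIocIndicator_apply s e
  rw [this]
  exact (Measurable.ite (measurableSet_lt measurable_const measurable_snd) measurable_const
    measurable_const).sub (Measurable.ite (measurableSet_lt measurable_fst measurable_snd)
    measurable_const measurable_const)

theorem integral_mul_nonneg_of_setIntegral_lt_nonpos {α : Type*} [MeasurableSpace α]
    {μ : Measure α} [SFinite μ] {σ h : α → ℝ} (hσ : Measurable σ) (hh : Integrable h μ)
    (hσh : Integrable (fun x => σ x * h x) μ) (htot : ∫ x, h x ∂μ = 0)
    (hsub : ∀ e, ∫ x in {x | σ x < e}, h x ∂μ ≤ 0) : 0 ≤ ∫ x, σ x * h x ∂μ := by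
  set w : α → ℝ → ℝ := fun x e => h x * signedIocIndicator (σ x) e
  have hw_meas : AEStronglyMeasurable (Function.uncurry w) (μ.prod volume) :=
    hh.1.comp_fst.mul (measurable_signedIocIndicator.comp
      ((hσ.comp measurable_fst).prodMk measurable_snd)).aestronglyMeasurable
  have hw : Integrable (Function.uncurry w) (μ.prod volume) := by
    rw [integrable_prod_iff hw_meas]
    refine ⟨ae_of_all _ fun x => (integrable_signedIocIndicator (σ x)).const_mul (h x), ?_⟩
    simpa [w, norm_mul, integral_const_mul, integral_abs_signedIocIndicator, mul_comm]
      using hσh.norm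
  have hslice (e : ℝ) : ∫ x, w x e ∂μ = -∫ x in {x | σ x < e}, h x ∂μ := by
    have hw_e : (fun x => w x e) =
        fun x => (if 0 < e then h x else 0) - {x | σ x < e}.indicator h x := by
      ext x
      simp only [w, signedIocIndicator_apply, indicator_apply, mem_ofPred_eq]
      split_ifs <;> ring
    rw [hw_e, integral_sub, integral_indicator (measurableSet_lt hσ measurable_const)]
    · split_ifs <;> simp [htot]
    · split_ifs
      · exact hh
      · exact integrable_zero _ _ _
    · exact hh.indicator (measurableSet_lt hσ measurable_const)
  calc 0 ≤ ∫ e, ∫ x, w x e ∂μ := integral_nonneg fun e => by simpa [hslice] using hsub e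
    _ = ∫ x, (∫ e, w x e) ∂μ := (integral_integral_swap hw).symm
    _ = ∫ x, σ x * h x ∂μ := by simp [w, integral_const_mul, integral_signedIocIndicator, mul_comm]

lemma setLIntegral_ofReal_eq_lintegral_measure_inter_lt {α : Type*} [MeasurableSpace α]
    {μ : Measure α} {S : Set α} (hS : MeasurableSet S) {φ : α → ℝ}
    (hφ : AEMeasurable φ (μ.restrict S)) (hφ0 : 0 ≤ᵐ[μ.restrict S] φ) :
    ∫⁻ x in S, ENNReal.ofReal (φ x) ∂μ = ∫⁻ t in Ioi 0, μ (S ∩ {x | t < φ x}) := by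
  rw [lintegral_eq_lintegral_meas_lt _ hφ0 hφ]
  simp_rw [Measure.restrict_apply' hS, inter_comm]

section Jacobian

variable {d : ℕ} {Ω : Set (EuclideanSpace ℝ (Fin d))} {σ : EuclideanSpace ℝ (Fin d) → ℝ}

lemma aSig_mono : Monotone (aSig Ω σ) := fun _ _ h =>
  measure_mono fun _ hx => ⟨hx.1, hx.2.trans_le h⟩

lemma aSig_le_volume (e : EReal) : aSig Ω σ e ≤ volume Ω :=
  measure_mono fun _ hx => hx.1

lemma aSig_top : aSig Ω σ ⊤ = volume Ω := by
  simp [aSig]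

lemma aSig_le_of_forall_lt {c : EReal} {μ : ℝ≥0∞} (h : ∀ e < c, aSig Ω σ e ≤ μ) :
    aSig Ω σ c ≤ μ := by
  rcases eq_bot_or_bot_lt c with rfl | hc
  · simp [aSig]
  obtain ⟨u, hu_mono, hu_mem, hu_lim⟩ := exists_seq_strictMono_tendsto' hc
  have hunion : {x | x ∈ Ω ∧ (σ x : EReal) < c} = ⋃ n, {x | x ∈ Ω ∧ (σ x : EReal) < u n} := by
    ext x
    simp only [mem_iUnion, mem_ofPred_eq]
    refine ⟨fun ⟨hx, hxc⟩ => ?_, fun ⟨n, hx, hxn⟩ => ⟨hx, hxn.trans (hu_mem n).2⟩⟩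
    obtain ⟨n, hn⟩ := (hu_lim.eventually (lt_mem_nhds hxc)).exists
    exact ⟨n, hx, hn⟩
  have hmono : Monotone fun n => {x | x ∈ Ω ∧ (σ x : EReal) < u n} :=
    fun m n hmn x hx => ⟨hx.1, hx.2.trans_le (hu_mono.monotone hmn)⟩
  rw [aSig, hunion, hmono.measure_iUnion]
  exact iSup_le fun n => h _ (hu_mem n).2

lemma SigAdmissible.measurableSet_sublevel (hσ : SigAdmissible Ω σ) (e : EReal) :
    MeasurableSet {x | x ∈ Ω ∧ (σ x : EReal) < e} :=
  hσ.measurableSet_Ω.inter (measurable_coe_real_ereal.comp hσ.measurable_σ measurableSet_Iio)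

lemma SigAdmissible.volume_le_eq_aSig (hσ : SigAdmissible Ω σ) {c : EReal} (hc : c < eMax Ω σ) :
    volume {x | x ∈ Ω ∧ (σ x : EReal) ≤ c} = aSig Ω σ c := by
  have hlevel : volume {x | x ∈ Ω ∧ (σ x : EReal) = c} = 0 := by
    induction c using EReal.rec with
    | bot => simp
    | coe e => simpa using hσ.levelSets e hc
    | top => exact absurd hc not_top_lt
  refine le_antisymm ?_ (measure_mono fun x hx => ⟨hx.1, hx.2.le⟩)
  calc volume {x | x ∈ Ω ∧ (σ x : EReal) ≤ c}
      ≤ volume ({x | x ∈ Ω ∧ (σ x : EReal) < c} ∪ {x | x ∈ Ω ∧ (σ x : EReal) = c}) :=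
        measure_mono fun x ⟨hx, hxc⟩ => hxc.lt_or_eq.imp (⟨hx, ·⟩) (⟨hx, ·⟩)
    _ ≤ aSig Ω σ c + 0 := hlevel ▸ measure_union_le _ _
    _ = aSig Ω σ c := add_zero _

lemma SigAdmissible.exists_gt_aSig_lt (hσ : SigAdmissible Ω σ) {c : EReal} (hc : c < eMax Ω σ)
    {μ : ℝ≥0∞} (hμ : aSig Ω σ c < μ) :
    ∃ r > c, aSig Ω σ r < μ := by
  obtain ⟨e, he, hce⟩ := lt_sSup_iff.1 hc
  obtain ⟨u, hu_anti, hu_mem, hu_lim⟩ := exists_seq_strictAnti_tendsto' hce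
  have hinter : ⋂ n, {x | x ∈ Ω ∧ (σ x : EReal) < u n} = {x | x ∈ Ω ∧ (σ x : EReal) ≤ c} := by
    ext x
    simp only [mem_iInter, mem_ofPred_eq]
    refine ⟨fun h => ⟨(h 0).1, le_of_forall_gt fun r hr => ?_⟩,
      fun ⟨hx, hxc⟩ n => ⟨hx, hxc.trans_lt (hu_mem n).1⟩⟩
    obtain ⟨n, hn⟩ := (hu_lim.eventually (gt_mem_nhds hr)).exists
    exact (h n).2.trans hn
  have hanti : Antitone fun n => {x | x ∈ Ω ∧ (σ x : EReal) < u n} :=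
    fun m n hmn x hx => ⟨hx.1, hx.2.trans_le (hu_anti.antitone hmn)⟩
  have hfin : aSig Ω σ (u 0) ≠ ∞ :=
    ((aSig_mono (hu_mem 0).2.le).trans_lt (he.trans_le le_top)).ne
  have hlim := tendsto_measure_iInter_atTop
    (fun n => (hσ.measurableSet_sublevel (u n)).nullMeasurableSet) hanti ⟨0, hfin⟩
  rw [hinter, hσ.volume_le_eq_aSig hc] at hlim
  obtain ⟨n, hn⟩ := (hlim.eventually (gt_mem_nhds hμ)).exists
  exact ⟨u n, (hu_mem n).1, hn⟩

lemma SigAdmissible.aSig_eMax (hσ : SigAdmissible Ω σ) : aSig Ω σ (eMax Ω σ) = volume Ω := by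
  have : (comap (fun e : ℝ => (e : EReal)) (𝓝[<] eMax Ω σ)).NeBot := by
    refine comap_neBot fun t ht => ?_
    obtain ⟨l, hl, hlt⟩ := (mem_nhdsLT_iff_exists_Ioo_subset' (bot_le.trans_lt
      hσ.eMin_lt_eMax)).1 ht
    obtain ⟨r, hlr, hr⟩ := EReal.lt_iff_exists_real_btwn.1 hl
    exact ⟨r, hlt ⟨hlr, hr⟩⟩
  refine le_antisymm (aSig_le_volume _) (le_of_tendsto hσ.tendsto_eMax ?_)
  filter_upwards [preimage_mem_comap self_mem_nhdsWithin] with e he using aSig_mono (le_of_lt he)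

lemma SigAdmissible.volume_aSig_lt (hσ : SigAdmissible Ω σ) {μ : ℝ≥0∞} (hμ : μ ≤ volume Ω) :
    volume {x | x ∈ Ω ∧ aSig Ω σ (σ x) < μ} = μ := by
  -- `{a_σ(σ) < μ} = {σ < c}`, and the one-sided continuity of `a_σ` forces `a_σ(c) = μ`.
  set c := sSup {e : EReal | aSig Ω σ e < μ}
  have hlt_c {e : EReal} (he : e < c) : aSig Ω σ e < μ := by
    obtain ⟨e', he', hee'⟩ := lt_sSup_iff.1 he
    exact (aSig_mono hee'.le).trans_lt he'
  have hc_le : aSig Ω σ c ≤ μ := aSig_le_of_forall_lt fun e he => (hlt_c he).le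
  have hle_c : μ ≤ aSig Ω σ c := by
    by_contra! hc
    rcases lt_or_ge c (eMax Ω σ) with hcm | hcm
    · obtain ⟨r, hcr, hr⟩ := hσ.exists_gt_aSig_lt hcm hc
      exact hcr.not_ge (le_sSup hr)
    · exact hc.not_ge (hμ.trans (hσ.aSig_eMax ▸ aSig_mono hcm))
  have hset : {x | x ∈ Ω ∧ aSig Ω σ (σ x) < μ} = {x | x ∈ Ω ∧ (σ x : EReal) < c} := by
    ext x
    refine and_congr_right fun _ => ⟨fun hx => lt_of_not_ge fun hcx => ?_, hlt_c⟩
    exact (hle_c.trans (aSig_mono hcx)).not_gt hx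
  rw [hset]
  exact le_antisymm hc_le hle_c

lemma SigAdmissible.volume_lt_inter_aSig_lt (hσ : SigAdmissible Ω σ) (e : EReal) (μ : ℝ≥0∞) :
    volume ({x | x ∈ Ω ∧ (σ x : EReal) < e} ∩ {x | aSig Ω σ (σ x) < μ}) =
      min (aSig Ω σ e) μ := by
  rcases lt_or_ge (aSig Ω σ e) μ with h | h
  · rw [min_eq_left h.le, aSig]
    congr 1
    ext x
    exact ⟨And.left, fun hx => ⟨hx, (aSig_mono hx.2.le).trans_lt h⟩⟩
  · rw [min_eq_right h]
    refine Eq.trans ?_ (hσ.volume_aSig_lt (h.trans (aSig_le_volume e)))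
    congr 1
    ext x
    refine ⟨fun hx => ⟨hx.1.1, hx.2⟩, fun hx => ⟨⟨hx.1, lt_of_not_ge fun hex => ?_⟩, hx.2⟩⟩
    exact (h.trans (aSig_mono hex)).not_gt hx.2

lemma SigAdmissible.volume_aSig_eq_zero (hσ : SigAdmissible Ω σ) :
    volume {x | x ∈ Ω ∧ aSig Ω σ (σ x) = 0} = 0 := by
  by_contra! h
  obtain ⟨e, he⟩ := hσ.exists_lt
  obtain ⟨ε, hε0, hε⟩ :=
    exists_between (lt_min (pos_iff_ne_zero.2 h) (zero_le.trans_lt he))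
  refine (hε.trans_le (min_le_left _ _)).not_ge ?_
  calc volume {x | x ∈ Ω ∧ aSig Ω σ (σ x) = 0}
      ≤ volume {x | x ∈ Ω ∧ aSig Ω σ (σ x) < ε} := measure_mono fun x hx => ⟨hx.1, hx.2 ▸ hε0⟩
    _ = ε := hσ.volume_aSig_lt (hε.le.trans (min_le_right _ _))

end Jacobian

section PseudoInverse

variable {d : ℕ} {Ω : Set (EuclideanSpace ℝ (Fin d))} {q : EuclideanSpace ℝ (Fin d) → ℝ}

lemma distFun_antitone : Antitone (distFun Ω q) := fun _ _ h =>
  measure_mono fun _ hx => ⟨hx.1, h.trans_lt hx.2⟩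

lemma distFun_le_volume (t : ℝ) : distFun Ω q t ≤ volume Ω :=
  measure_mono fun _ hx => hx.1

lemma pseudoInv_nonneg (s : ℝ≥0∞) : 0 ≤ pseudoInv Ω q s :=
  Real.sInf_nonneg fun _ ht => ht.1

lemma pseudoInv_le {t : ℝ} {s : ℝ≥0∞} (ht : 0 ≤ t) (h : distFun Ω q t ≤ s) :
    pseudoInv Ω q s ≤ t :=
  csInf_le ⟨0, fun _ ht' => ht'.1⟩ ⟨ht, h⟩

lemma exists_distFun_le (hΩ : MeasurableSet Ω) (hq : IntegrableOn q Ω) {s : ℝ≥0∞} (hs : 0 < s) :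
    ∃ t, 0 ≤ t ∧ distFun Ω q t ≤ s := by
  have hdist (t : ℝ) : distFun Ω q t = volume.restrict Ω {x | t < q x} := by
    rw [Measure.restrict_apply' hΩ, inter_comm]
    rfl
  have hanti : Antitone fun t : ℝ => {x | t < q x} := fun _ _ h _ hx => h.trans_lt hx
  have hfin : volume.restrict Ω {x | 1 < q x} ≠ ∞ :=
    (measure_mono fun x hx => hx.le.trans (le_abs_self (q x))).trans_lt
      (hq.measure_norm_ge_lt_top one_pos) |>.ne
  have hlim := tendsto_measure_iInter_atTop (s := fun t : ℝ => {x | t < q x})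
    (fun t => hq.aemeasurable.nullMeasurable measurableSet_Ioi) hanti ⟨1, hfin⟩
  have hempty : ⋂ t : ℝ, {x | t < q x} = ∅ :=
    eq_empty_of_forall_notMem fun x hx => lt_irrefl (q x) (mem_iInter.1 hx (q x))
  rw [hempty, measure_empty] at hlim
  obtain ⟨t, hts, ht⟩ := ((hlim.eventually (gt_mem_nhds hs)).and (eventually_ge_atTop 0)).exists
  exact ⟨t, ht, (hdist t).trans_le hts.le⟩

lemma lt_pseudoInv (hΩ : MeasurableSet Ω) (hq : IntegrableOn q Ω) {t : ℝ} {s : ℝ≥0∞}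
    (hs : 0 < s) (h : s < distFun Ω q t) : t < pseudoInv Ω q s := by
  obtain ⟨u, hu_anti, hu_mem, hu_lim⟩ := exists_seq_strictAnti_tendsto t
  have hmono : Monotone fun n => {x | x ∈ Ω ∧ u n < q x} :=
    fun m n hmn x hx => ⟨hx.1, (hu_anti.antitone hmn).trans_lt hx.2⟩
  have hunion : ⋃ n, {x | x ∈ Ω ∧ u n < q x} = {x | x ∈ Ω ∧ t < q x} := by
    ext x
    simp only [mem_iUnion, mem_ofPred_eq]
    refine ⟨fun ⟨n, hx, hxn⟩ => ⟨hx, (hu_mem n).trans hxn⟩, fun ⟨hx, hxt⟩ => ?_⟩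
    obtain ⟨n, hn⟩ := (hu_lim.eventually (gt_mem_nhds hxt)).exists
    exact ⟨n, hx, hn⟩
  have hlim := tendsto_measure_iUnion_atTop (μ := volume) hmono
  rw [hunion] at hlim
  obtain ⟨n, hn⟩ := (hlim.eventually (lt_mem_nhds h)).exists
  obtain ⟨t₀, ht₀, ht₀s⟩ := exists_distFun_le hΩ hq hs
  refine (hu_mem n).trans_le (le_csInf ⟨t₀, ht₀, ht₀s⟩ fun t' ht' => ?_)
  by_contra! h'
  exact (ht'.2.trans_lt hn).not_ge (distFun_antitone h'.le)

lemma pseudoInv_antitoneOn (hΩ : MeasurableSet Ω) (hq : IntegrableOn q Ω) :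
    AntitoneOn (pseudoInv Ω q) (Ioi 0) := fun s hs _ _ hss' => by
  obtain ⟨t₀, ht₀, ht₀s⟩ := exists_distFun_le hΩ hq hs
  exact csInf_le_csInf ⟨0, fun _ h => h.1⟩ ⟨t₀, ht₀, ht₀s⟩ fun t ht => ⟨ht.1, ht.2.trans hss'⟩

lemma measurable_pseudoInv (hΩ : MeasurableSet Ω) (hq : IntegrableOn q Ω) :
    Measurable (pseudoInv Ω q) := by
  have : Subsingleton ↥(Ioi (0 : ℝ≥0∞))ᶜ := by
    rw [compl_Ioi, ← bot_eq_zero, Set.Iic_bot]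
    infer_instance
  refine measurable_of_restrict_of_restrict_compl (measurableSet_Ioi (a := 0)) ?_
    Subsingleton.measurable
  exact Antitone.measurable fun a b hab => pseudoInv_antitoneOn hΩ hq a.2 b.2 hab

end PseudoInverse

section Rearrangement

variable {d : ℕ} {Ω : Set (EuclideanSpace ℝ (Fin d))} {σ q : EuclideanSpace ℝ (Fin d) → ℝ}

lemma sigRearr_nonneg (x : EuclideanSpace ℝ (Fin d)) : 0 ≤ sigRearr Ω σ q x := by
  unfold sigRearr
  split_ifs
  exacts [pseudoInv_nonneg _, le_rfl]

lemma SigAdmissible.measurable_sigRearr (hσ : SigAdmissible Ω σ) (hq : IntegrableOn q Ω) :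
    Measurable (sigRearr Ω σ q) :=
  have hσ' : Measurable fun x => (σ x : EReal) := measurable_coe_real_ereal.comp hσ.measurable_σ
  Measurable.ite (hσ' measurableSet_Iio)
    ((measurable_pseudoInv hσ.measurableSet_Ω hq).comp (aSig_mono.measurable.comp hσ'))
    measurable_const

lemma SigAdmissible.volume_lt_inter_lt_sigRearr (hσ : SigAdmissible Ω σ) (hq : IntegrableOn q Ω)
    (e : EReal) {t : ℝ} (ht : 0 ≤ t) :
    volume ({x | x ∈ Ω ∧ (σ x : EReal) < e} ∩ {x | t < sigRearr Ω σ q x}) =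
      min (aSig Ω σ e) (distFun Ω q t) := by
  rw [← hσ.volume_lt_inter_aSig_lt]
  have hsub {x} (hx : t < sigRearr Ω σ q x) : aSig Ω σ (σ x) < distFun Ω q t := by
    unfold sigRearr at hx
    split_ifs at hx
    exacts [lt_of_not_ge fun h => (pseudoInv_le ht h).not_gt hx, absurd hx ht.not_gt]
  have hsup {x} (hx : x ∈ Ω) (hD : aSig Ω σ (σ x) < distFun Ω q t) (h0 : 0 < aSig Ω σ (σ x)) :
      t < sigRearr Ω σ q x := by
    have hσx : (σ x : EReal) < eMax Ω σ := lt_of_not_ge fun h =>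
      (hD.trans_le (distFun_le_volume t)).not_ge (hσ.aSig_eMax ▸ aSig_mono h)
    rw [sigRearr, if_pos hσx]
    exact lt_pseudoInv hσ.measurableSet_Ω hq h0 hD
  refine le_antisymm (measure_mono fun x hx => ⟨hx.1, hsub hx.2⟩)
    (measure_mono_ae (ae_le_set.2 (measure_mono_null ?_ hσ.volume_aSig_eq_zero)))
  rintro x ⟨⟨hxe, hxD⟩, hx'⟩
  exact ⟨hxe.1, by_contra fun h0 => hx' ⟨hxe, hsup hxe.1 hxD (pos_iff_ne_zero.2 h0)⟩⟩

lemma SigAdmissible.setLIntegral_sigRearr (hσ : SigAdmissible Ω σ) (hq : IntegrableOn q Ω)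
    (e : EReal) :
    ∫⁻ x in {x | x ∈ Ω ∧ (σ x : EReal) < e}, ENNReal.ofReal (sigRearr Ω σ q x) =
      ∫⁻ t in Ioi 0, min (aSig Ω σ e) (distFun Ω q t) := by
  rw [setLIntegral_ofReal_eq_lintegral_measure_inter_lt (hσ.measurableSet_sublevel e)
    (hσ.measurable_sigRearr hq).aemeasurable (ae_of_all _ sigRearr_nonneg)]
  exact setLIntegral_congr_fun measurableSet_Ioi fun t ht =>
    hσ.volume_lt_inter_lt_sigRearr hq e (le_of_lt ht)

lemma SigAdmissible.setLIntegral_le_setLIntegral_sigRearr (hσ : SigAdmissible Ω σ)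
    (hq : IntegrableOn q Ω) (hq0 : 0 ≤ᵐ[volume.restrict Ω] q) (e : EReal) :
    ∫⁻ x in {x | x ∈ Ω ∧ (σ x : EReal) < e}, ENNReal.ofReal (q x) ≤
      ∫⁻ x in {x | x ∈ Ω ∧ (σ x : EReal) < e}, ENNReal.ofReal (sigRearr Ω σ q x) := by
  have hS : {x | x ∈ Ω ∧ (σ x : EReal) < e} ⊆ Ω := fun _ hx => hx.1
  rw [hσ.setLIntegral_sigRearr hq, setLIntegral_ofReal_eq_lintegral_measure_inter_lt
    (hσ.measurableSet_sublevel e) (hq.mono_set hS).aemeasurable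
    (ae_restrict_of_ae_restrict_of_subset hS hq0)]
  exact lintegral_mono fun t => le_min (measure_mono inter_subset_left)
    (measure_mono fun x hx => ⟨hx.1.1, hx.2⟩)

lemma SigAdmissible.lintegral_sigRearr (hσ : SigAdmissible Ω σ) (hq : IntegrableOn q Ω)
    (hq0 : 0 ≤ᵐ[volume.restrict Ω] q) :
    ∫⁻ x in Ω, ENNReal.ofReal (sigRearr Ω σ q x) = ∫⁻ x in Ω, ENNReal.ofReal (q x) := by
  have h := hσ.setLIntegral_sigRearr hq ⊤
  rw [show {x | x ∈ Ω ∧ (σ x : EReal) < ⊤} = Ω by ext; simp] at h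
  rw [h, setLIntegral_ofReal_eq_lintegral_measure_inter_lt hσ.measurableSet_Ω hq.aemeasurable hq0]
  refine lintegral_congr fun t => ?_
  rw [aSig_top, min_eq_right (distFun_le_volume t)]
  rfl

lemma SigAdmissible.integrableOn_sigRearr (hσ : SigAdmissible Ω σ) (hq : IntegrableOn q Ω)
    (hq0 : 0 ≤ᵐ[volume.restrict Ω] q) : IntegrableOn (sigRearr Ω σ q) Ω := by
  refine ⟨(hσ.measurable_sigRearr hq).aestronglyMeasurable, ?_⟩
  rw [hasFiniteIntegral_iff_ofReal (ae_of_all _ sigRearr_nonneg), hσ.lintegral_sigRearr hq hq0]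
  exact hq.lintegral_lt_top

lemma SigAdmissible.integral_sigRearr (hσ : SigAdmissible Ω σ) (hq : IntegrableOn q Ω)
    (hq0 : 0 ≤ᵐ[volume.restrict Ω] q) : ∫ x in Ω, sigRearr Ω σ q x = ∫ x in Ω, q x := by
  rw [integral_eq_lintegral_of_nonneg_ae (ae_of_all _ sigRearr_nonneg)
      (hσ.measurable_sigRearr hq).aestronglyMeasurable,
    integral_eq_lintegral_of_nonneg_ae hq0 hq.aestronglyMeasurable, hσ.lintegral_sigRearr hq hq0]

lemma SigAdmissible.setIntegral_le_setIntegral_sigRearr (hσ : SigAdmissible Ω σ)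
    (hq : IntegrableOn q Ω) (hq0 : 0 ≤ᵐ[volume.restrict Ω] q) (e : EReal) :
    ∫ x in {x | x ∈ Ω ∧ (σ x : EReal) < e}, q x ≤
      ∫ x in {x | x ∈ Ω ∧ (σ x : EReal) < e}, sigRearr Ω σ q x := by
  have hS : {x | x ∈ Ω ∧ (σ x : EReal) < e} ⊆ Ω := fun _ hx => hx.1
  rw [integral_eq_lintegral_of_nonneg_ae (ae_restrict_of_ae_restrict_of_subset hS hq0)
      (hq.mono_set hS).aestronglyMeasurable,
    integral_eq_lintegral_of_nonneg_ae (ae_of_all _ sigRearr_nonneg)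
      (hσ.measurable_sigRearr hq).aestronglyMeasurable]
  exact ENNReal.toReal_mono ((hσ.integrableOn_sigRearr hq hq0).mono_set hS).lintegral_lt_top.ne
    (hσ.setLIntegral_le_setLIntegral_sigRearr hq hq0 e)

end Rearrangement

theorem generalized_hardy_littlewood_general {d : ℕ} (Ω : Set (EuclideanSpace ℝ (Fin d)))
    (σ : EuclideanSpace ℝ (Fin d) → ℝ) (hσ : SigAdmissible Ω σ)
    (f : EuclideanSpace ℝ (Fin d) → ℝ) (hf_nonneg : ∀ x ∈ Ω, 0 ≤ f x)
    (hf_int : MeasureTheory.IntegrableOn f Ω)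
    (h_int_energy : MeasureTheory.IntegrableOn (fun x => σ x * (f x - sigRearr Ω σ f x)) Ω) :
    0 ≤ ∫ x in Ω, σ x * (f x - sigRearr Ω σ f x) := by
  have hf0 : 0 ≤ᵐ[volume.restrict Ω] f := ae_restrict_of_forall_mem hσ.measurableSet_Ω hf_nonneg
  have hg := hσ.integrableOn_sigRearr hf_int hf0
  refine integral_mul_nonneg_of_setIntegral_lt_nonpos hσ.measurable_σ (hf_int.sub hg)
    h_int_energy ?_ fun e => ?_
  · rw [integral_sub hf_int hg, hσ.integral_sigRearr hf_int hf0, sub_self]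
  · have hS : Ω ∩ {x | σ x < e} = {x | x ∈ Ω ∧ (σ x : EReal) < e} := by
      ext x
      simp [EReal.coe_lt_coe_iff]
    rw [Measure.restrict_restrict (measurableSet_lt hσ.measurable_σ measurable_const), inter_comm,
      hS, integral_sub (hf_int.mono_set fun _ hx => hx.1) (hg.mono_set fun _ hx => hx.1),
      sub_nonpos]
    exact hσ.setIntegral_le_setIntegral_sigRearr hf_int hf0 e

/-- generalized Hardy–Littlewood inequality: for admissible `σ` with
finite `B_σ` and any nonnegative `f ∈ L¹(Ω)`, `∫_Ω σ(x)(f(x) − f^{*σ}(x)) dx ≥ 0`. -/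
theorem generalized_hardy_littlewood {d : ℕ} (Ω : Set (EuclideanSpace ℝ (Fin d)))
    (σ : EuclideanSpace ℝ (Fin d) → ℝ) (hσ : SigAdmissible Ω σ) (hB : BSigFinite Ω σ)
    (f : EuclideanSpace ℝ (Fin d) → ℝ) (hf_nonneg : ∀ x ∈ Ω, 0 ≤ f x)
    (hf_int : MeasureTheory.IntegrableOn f Ω)
    (h_int_energy : MeasureTheory.IntegrableOn (fun x => σ x * (f x - sigRearr Ω σ f x)) Ω) :
    0 ≤ ∫ x in Ω, σ x * (f x - sigRearr Ω σ f x) :=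
  generalized_hardy_littlewood_general Ω σ hσ f hf_nonneg hf_int h_int_energy
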